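/- Let W, ε_1, ε_0 be mutually independent real random variables with W ~ N(μ_e, σ_e^2), ε_1 ~ N(μ_1, σ_1^2), ε_0 ~ N(μ_0, σ_0^2), where σ_e > 0 and σ_1, σ_0 ≥ 0. Define the potential outcomes Y(z) = a_z W + ε_z for z ∈ {0,1} with a_1, a_0 ∈ ℝ, and the propensity score e = expit(W) where expit(w) = 1/(1+e^{−w}). Then V := E[{Y(1) − E[Y(1)]}^2 / e] + E[{Y(0) − E[Y(0)]}^2 / (1 − e)] = (a_1^2 + a_0^2) σ_e^2 + σ_1^2 + σ_0^2 + (a_1^2 σ_e^2(σ_e^2 + 1) + σ_1^2) · exp(−μ_e + σ_e^2/2) + (a_0^2 σ_e^2(σ_e^2 + 1) + σ_0^2) · exp(μ_e + σ_e^2/2). -/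

import Mathlib

open MeasureTheory ProbabilityTheory

/-!
Dividing by `expit W` multiplies by `1 + e^{-W}`, and dividing by `1 - expit W = expit (-W)`
multiplies by `1 + e^{W}`. In each arm, `Y(z) - E Y(z) = a_z (W - μₑ) + (ε_z - μ_z)` and the
noise is independent of `W` and centred, so the cross term vanishes and everything reduces to the
Gaussian integrals `E[(W - μₑ)²]`, `E[e^{tW}]` and `E[(W - μₑ)² e^{tW}]`. The last one comes from
exponential tilting: `e^{tx} N(μ, v)(dx) = e^{μt + vt²/2} N(μ + vt, v)(dx)`.
-/

noncomputable def expit (w : ℝ) : ℝ := 1 / (1 + Real.exp (-w))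

open Real
open scoped NNReal ENNReal

lemma one_sub_expit (w : ℝ) : 1 - expit w = expit (-w) := by
  have h₁ : 0 < 1 + exp (-w) := by positivity
  have h₂ : 0 < 1 + exp w := by positivity
  simp only [expit, neg_neg]
  field_simp
  rw [exp_neg]
  field_simp
  ring

lemma inv_expit (w : ℝ) : (expit w)⁻¹ = 1 + exp (-w) := by
  simp [expit]

namespace ProbabilityTheory

section Gaussian

variable {μ : ℝ} {v : ℝ≥0}

lemma gaussianPDFReal_mul_exp_mul (hv : v ≠ 0) (t x : ℝ) :
    gaussianPDFReal μ v x * exp (t * x)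
      = exp (μ * t + v * t ^ 2 / 2) * gaussianPDFReal (μ + v * t) v x := by
  have hv' : (v : ℝ) ≠ 0 := NNReal.coe_ne_zero.mpr hv
  simp only [gaussianPDFReal]
  rw [mul_assoc, ← exp_add, mul_left_comm, ← exp_add]
  congr 2
  field_simp
  ring

lemma integral_exp_mul_gaussianReal (t : ℝ) :
    ∫ x, exp (t * x) ∂gaussianReal μ v = exp (μ * t + v * t ^ 2 / 2) :=
  congrFun mgf_fun_id_gaussianReal t

lemma gaussianReal_tilted_mul (t : ℝ) :
    (gaussianReal μ v).tilted (t * ·) = gaussianReal (μ + v * t) v := by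
  by_cases hv : v = 0
  · subst hv
    simp [Measure.tilted, gaussianReal_zero_var, dirac_withDensity]
  rw [Measure.tilted, integral_exp_mul_gaussianReal, gaussianReal_of_var_ne_zero _ hv,
    gaussianReal_of_var_ne_zero _ hv,
    ← withDensity_mul _ (measurable_gaussianPDF _ _) (by fun_prop)]
  congr with x
  simp only [Pi.mul_apply, gaussianPDF, ← ENNReal.ofReal_mul (gaussianPDFReal_nonneg _ _ _),
    mul_div_assoc', gaussianPDFReal_mul_exp_mul hv]
  congr 1
  field_simp

lemma integral_mul_exp_gaussianReal (g : ℝ → ℝ) (t : ℝ) :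
    ∫ x, g x * exp (t * x) ∂gaussianReal μ v
      = exp (μ * t + v * t ^ 2 / 2) * ∫ x, g x ∂gaussianReal (μ + v * t) v := by
  rw [← gaussianReal_tilted_mul, integral_tilted_mul_eq_mgf, mgf_fun_id_gaussianReal,
    ← integral_const_mul]
  congr with x
  rw [smul_eq_mul]
  field_simp

lemma integral_sq_gaussianReal : ∫ x, x ^ 2 ∂gaussianReal μ v = v + μ ^ 2 := by
  have h := variance_eq_sub (memLp_id_gaussianReal (μ := μ) (v := v) 2)
  simp only [variance_id_gaussianReal, integral_id_gaussianReal, Pi.pow_apply, id] at h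
  linarith

lemma integral_sq_mul_exp_gaussianReal (t : ℝ) :
    ∫ x, x ^ 2 * exp (t * x) ∂gaussianReal μ v
      = exp (μ * t + v * t ^ 2 / 2) * (v + (μ + v * t) ^ 2) := by
  rw [integral_mul_exp_gaussianReal, integral_sq_gaussianReal]

lemma integrable_pow_mul_exp_gaussianReal (n : ℕ) (t : ℝ) :
    Integrable (fun x ↦ x ^ n * exp (t * x)) (gaussianReal μ v) :=
  integrable_pow_mul_exp_of_mem_interior_integrableExpSet (by simp) n

lemma integrable_pow_gaussianReal (n : ℕ) : Integrable (fun x ↦ x ^ n) (gaussianReal μ v) := by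
  simpa using integrable_pow_mul_exp_gaussianReal (μ := μ) (v := v) n 0

lemma integrable_pow_mul_one_add_exp_gaussianReal (n : ℕ) (c t : ℝ) :
    Integrable (fun x ↦ x ^ n * (1 + c * exp (t * x))) (gaussianReal μ v) := by
  simpa only [mul_add, mul_one, mul_left_comm _ c] using
    (integrable_pow_gaussianReal n).fun_add
      ((integrable_pow_mul_exp_gaussianReal n t).const_mul c)

lemma integral_pow_mul_one_add_exp_gaussianReal (n : ℕ) (c t : ℝ) :
    ∫ x, x ^ n * (1 + c * exp (t * x)) ∂gaussianReal μ v
      = ∫ x, x ^ n ∂gaussianReal μ v + c * ∫ x, x ^ n * exp (t * x) ∂gaussianReal μ v := by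
  simp only [mul_add, mul_one, mul_left_comm _ c]
  rw [integral_add (integrable_pow_gaussianReal n)
    ((integrable_pow_mul_exp_gaussianReal n t).const_mul c), integral_const_mul]

lemma integral_one_add_mul_exp_gaussianReal (c t : ℝ) :
    ∫ x, (1 + c * exp (t * x)) ∂gaussianReal μ v = 1 + c * exp (μ * t + v * t ^ 2 / 2) := by
  simpa [integral_exp_mul_gaussianReal] using
    integral_pow_mul_one_add_exp_gaussianReal (μ := μ) (v := v) 0 c t

lemma integral_sq_mul_one_add_exp_gaussianReal (c t : ℝ) :
    ∫ x, x ^ 2 * (1 + c * exp (t * x)) ∂gaussianReal μ v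
      = v + μ ^ 2 + c * (exp (μ * t + v * t ^ 2 / 2) * (v + (μ + v * t) ^ 2)) := by
  rw [integral_pow_mul_one_add_exp_gaussianReal, integral_sq_gaussianReal,
    integral_sq_mul_exp_gaussianReal]

end Gaussian

variable {Ω : Type*} [MeasurableSpace Ω] {P : Measure Ω}

lemma hasLaw_of_map_eq {𝓧 : Type*} [MeasurableSpace 𝓧] {X : Ω → 𝓧} {μ : Measure 𝓧}
    [IsProbabilityMeasure μ] (h : P.map X = μ) : HasLaw X μ P :=
  ⟨.of_map_ne_zero (h ▸ IsProbabilityMeasure.ne_zero μ), h⟩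

lemma HasLaw.integrable_comp {𝓧 : Type*} [MeasurableSpace 𝓧] {X : Ω → 𝓧} {μ : Measure 𝓧}
    (hX : HasLaw X μ P) {f : 𝓧 → ℝ} (hf : Integrable f μ) :
    Integrable (fun ω ↦ f (X ω)) P := by
  rw [← hX.map_eq] at hf
  exact hf.comp_aemeasurable hX.aemeasurable

lemma HasLaw.memLp_comp {𝓧 : Type*} [MeasurableSpace 𝓧] {X : Ω → 𝓧} {μ : Measure 𝓧}
    (hX : HasLaw X μ P) {f : 𝓧 → ℝ} {p : ℝ≥0∞} (hf : MemLp f p μ) :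
    MemLp (fun ω ↦ f (X ω)) p P := by
  rw [← hX.map_eq] at hf
  exact hf.comp_of_map hX.aemeasurable

lemma integral_const_mul_add_of_hasLaw_gaussianReal {W ε : Ω → ℝ} {μ m : ℝ} {v u : ℝ≥0}
    (hW : HasLaw W (gaussianReal μ v) P) (hε : HasLaw ε (gaussianReal m u) P) (a : ℝ) :
    ∫ ω, (a * W ω + ε ω) ∂P = a * μ + m := by
  have hid {μ' : ℝ} {v' : ℝ≥0} : Integrable (fun x ↦ x) (gaussianReal μ' v') := by
    simpa using integrable_pow_gaussianReal 1
  rw [integral_add ((hW.integrable_comp hid).const_mul a) (hε.integrable_comp hid),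
    integral_const_mul, hW.integral_eq, hε.integral_eq, integral_id_gaussianReal,
    integral_id_gaussianReal]

variable [IsProbabilityMeasure P]

lemma integral_add_sq_mul_of_indepFun {X Z : Ω → ℝ} (hXZ : X ⟂ᵢ[P] Z)
    {g h : ℝ → ℝ} (hg : Measurable g) (hh : Measurable h)
    (hg2h : Integrable (fun ω ↦ g (X ω) ^ 2 * h (X ω)) P)
    (hgh : Integrable (fun ω ↦ g (X ω) * h (X ω)) P) (hhX : Integrable (fun ω ↦ h (X ω)) P)
    (hZ : MemLp Z 2 P) (hZ0 : ∫ ω, Z ω ∂P = 0) :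
    ∫ ω, (g (X ω) + Z ω) ^ 2 * h (X ω) ∂P
      = ∫ ω, g (X ω) ^ 2 * h (X ω) ∂P + (∫ ω, Z ω ^ 2 ∂P) * ∫ ω, h (X ω) ∂P := by
  have hghZ : (fun ω ↦ g (X ω) * h (X ω)) ⟂ᵢ[P] Z := hXZ.comp (hg.mul hh) measurable_id
  have hhZ2 : (fun ω ↦ h (X ω)) ⟂ᵢ[P] (fun ω ↦ Z ω ^ 2) :=
    hXZ.comp hh (measurable_id.pow_const 2)
  have hZ1 : Integrable Z P := hZ.integrable one_le_two
  have hZ2 : Integrable (fun ω ↦ Z ω ^ 2) P := hZ.integrable_sq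
  have hcross : Integrable (fun ω ↦ g (X ω) * h (X ω) * Z ω) P := hghZ.integrable_mul hgh hZ1
  have hnoise : Integrable (fun ω ↦ h (X ω) * Z ω ^ 2) P := hhZ2.integrable_mul hhX hZ2
  calc ∫ ω, (g (X ω) + Z ω) ^ 2 * h (X ω) ∂P
      = ∫ ω, g (X ω) ^ 2 * h (X ω) + 2 * (g (X ω) * h (X ω) * Z ω) + h (X ω) * Z ω ^ 2 ∂P := by
        congr with ω; ring
    _ = ∫ ω, g (X ω) ^ 2 * h (X ω) ∂P + 2 * ∫ ω, g (X ω) * h (X ω) * Z ω ∂P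
          + ∫ ω, h (X ω) * Z ω ^ 2 ∂P := by
        rw [integral_add (hg2h.fun_add (hcross.const_mul 2)) hnoise,
          integral_add hg2h (hcross.const_mul 2), integral_const_mul]
    _ = ∫ ω, g (X ω) ^ 2 * h (X ω) ∂P + (∫ ω, Z ω ^ 2 ∂P) * ∫ ω, h (X ω) ∂P := by
        rw [hghZ.integral_fun_mul_eq_mul_integral hgh.1 hZ1.1,
          hhZ2.integral_fun_mul_eq_mul_integral hhX.1 hZ2.1, hZ0]
        ring

lemma integral_sq_sub_integral_mul_one_add_exp {W ε : Ω → ℝ} (hWε : W ⟂ᵢ[P] ε) {μ m : ℝ}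
    {v u : ℝ≥0} (hW : HasLaw W (gaussianReal μ v) P) (hε : HasLaw ε (gaussianReal m u) P)
    (a t : ℝ) :
    ∫ ω, (a * W ω + ε ω - ∫ ω', (a * W ω' + ε ω') ∂P) ^ 2 * (1 + exp (t * W ω)) ∂P
      = a ^ 2 * v + u + (a ^ 2 * (v + v ^ 2 * t ^ 2) + u) * exp (μ * t + v * t ^ 2 / 2) := by
  have hW₀ : HasLaw (fun ω ↦ W ω - μ) (gaussianReal 0 v) P := by
    simpa using gaussianReal_sub_const hW μ
  have hZ : HasLaw (fun ω ↦ ε ω - m) (gaussianReal 0 u) P := by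
    simpa using gaussianReal_sub_const hε m
  set c := exp (μ * t)
  let g : ℝ → ℝ := fun x ↦ a * x
  let h : ℝ → ℝ := fun x ↦ 1 + c * exp (t * x)
  have hcentre (ω : Ω) : (a * W ω + ε ω - (a * μ + m)) ^ 2 * (1 + exp (t * W ω))
      = (g (W ω - μ) + (ε ω - m)) ^ 2 * h (W ω - μ) := by
    simp only [g, h, c, ← exp_add]
    ring_nf
  have hint (n : ℕ) : Integrable (fun ω ↦ (W ω - μ) ^ n * h (W ω - μ)) P :=
    hW₀.integrable_comp (integrable_pow_mul_one_add_exp_gaussianReal n c t)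
  have hZ0 : ∫ ω, (ε ω - m) ∂P = 0 := by
    rw [hZ.integral_eq, integral_id_gaussianReal]
  have hnoise : ∫ ω, (ε ω - m) ^ 2 ∂P = u :=
    (hZ.integral_comp (f := fun x ↦ x ^ 2) (by fun_prop)).trans
      (by simp [integral_sq_gaussianReal])
  have hlaw (f : ℝ → ℝ) (hf : Measurable f) : ∫ ω, f (W ω - μ) ∂P = ∫ x, f x ∂gaussianReal 0 v :=
    hW₀.integral_comp hf.aestronglyMeasurable
  have hweight : ∫ x, h x ∂gaussianReal 0 v = 1 + c * exp (v * t ^ 2 / 2) := by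
    simpa using integral_one_add_mul_exp_gaussianReal (μ := 0) (v := v) c t
  have hsignal : ∫ x, g x ^ 2 * h x ∂gaussianReal 0 v
      = a ^ 2 * (v + c * (exp (v * t ^ 2 / 2) * (v + v ^ 2 * t ^ 2))) := by
    simp only [g, mul_pow, mul_assoc]
    rw [integral_const_mul, integral_sq_mul_one_add_exp_gaussianReal]
    simp [mul_pow]
  have hind : (fun ω ↦ W ω - μ) ⟂ᵢ[P] (fun ω ↦ ε ω - m) :=
    hWε.comp (measurable_sub_const μ) (measurable_sub_const m)
  rw [integral_const_mul_add_of_hasLaw_gaussianReal hW hε, integral_congr_ae (.of_forall hcentre),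
    integral_add_sq_mul_of_indepFun hind (g := g) (h := h) (measurable_const_mul a) (by fun_prop)
      (by simpa [g, mul_pow, mul_assoc] using (hint 2).const_mul (a ^ 2))
      (by simpa [g, mul_assoc] using (hint 1).const_mul a) (by simpa using hint 0)
      (hZ.memLp_comp (memLp_id_gaussianReal 2)) hZ0,
    hlaw (fun x ↦ g x ^ 2 * h x) (by fun_prop), hlaw h (by fun_prop), hnoise, hweight, hsignal,
    show exp (μ * t + v * t ^ 2 / 2) = c * exp (v * t ^ 2 / 2) from exp_add _ _]
  ring

end ProbabilityTheory

theorem hajek_asymptotic_variance_closed_form_general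
    {Ω : Type*} [MeasurableSpace Ω] (P : Measure Ω) [IsProbabilityMeasure P]
    (W ε₁ ε₀ : Ω → ℝ)
    (hindep : iIndepFun ![W, ε₁, ε₀] P)
    (μₑ σₑ μ₁ μ₀ σ₁ σ₀ a₁ a₀ : ℝ)
    (hWlaw : Measure.map W P = gaussianReal μₑ ⟨σₑ ^ 2, sq_nonneg σₑ⟩)
    (hε₁law : Measure.map ε₁ P = gaussianReal μ₁ ⟨σ₁ ^ 2, sq_nonneg σ₁⟩)
    (hε₀law : Measure.map ε₀ P = gaussianReal μ₀ ⟨σ₀ ^ 2, sq_nonneg σ₀⟩) :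
    (∫ ω, (a₁ * W ω + ε₁ ω - ∫ ω', (a₁ * W ω' + ε₁ ω') ∂P) ^ 2 / expit (W ω) ∂P)
      + (∫ ω, (a₀ * W ω + ε₀ ω - ∫ ω', (a₀ * W ω' + ε₀ ω') ∂P) ^ 2 / (1 - expit (W ω)) ∂P)
      = (a₁ ^ 2 + a₀ ^ 2) * σₑ ^ 2 + σ₁ ^ 2 + σ₀ ^ 2
        + (a₁ ^ 2 * σₑ ^ 2 * (σₑ ^ 2 + 1) + σ₁ ^ 2) * Real.exp (-μₑ + σₑ ^ 2 / 2)
        + (a₀ ^ 2 * σₑ ^ 2 * (σₑ ^ 2 + 1) + σ₀ ^ 2) * Real.exp (μₑ + σₑ ^ 2 / 2) := by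
  -- naming the variances lets instance search see `IsProbabilityMeasure (gaussianReal _ _)`
  set v : ℝ≥0 := ⟨σₑ ^ 2, sq_nonneg σₑ⟩
  set u₁ : ℝ≥0 := ⟨σ₁ ^ 2, sq_nonneg σ₁⟩
  set u₀ : ℝ≥0 := ⟨σ₀ ^ 2, sq_nonneg σ₀⟩
  have hW₁ : W ⟂ᵢ[P] ε₁ := by simpa using hindep.indepFun (i := 0) (j := 1) (by decide)
  have hW₀ : W ⟂ᵢ[P] ε₀ := by simpa using hindep.indepFun (i := 0) (j := 2) (by decide)
  have arm₁ := integral_sq_sub_integral_mul_one_add_exp hW₁ (hasLaw_of_map_eq hWlaw)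
    (hasLaw_of_map_eq hε₁law) a₁ (-1)
  have arm₀ := integral_sq_sub_integral_mul_one_add_exp hW₀ (hasLaw_of_map_eq hWlaw)
    (hasLaw_of_map_eq hε₀law) a₀ 1
  simp only [neg_one_mul, one_mul] at arm₁ arm₀
  simp only [one_sub_expit, div_eq_mul_inv _ (expit _), inv_expit, neg_neg, arm₁, arm₀,
    show (v : ℝ) = σₑ ^ 2 from rfl, show (u₁ : ℝ) = σ₁ ^ 2 from rfl,
    show (u₀ : ℝ) = σ₀ ^ 2 from rfl]
  ring_nf

/-- Closed form of the asymptotic variance `V` of the Hájek IPW estimator under the working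
model: `W ~ N(μₑ, σₑ²)` is the latent logit-propensity, the potential outcomes are
`Y(z) = a_z W + ε_z` with mutually independent Gaussian noises, and `e = expit(W)`. Then
`V = E[{Y(1) − E Y(1)}²/e] + E[{Y(0) − E Y(0)}²/(1 − e)]` equals
`(a₁² + a₀²)σₑ² + σ₁² + σ₀² + (a₁²σₑ²(σₑ²+1) + σ₁²) e^{−μₑ+σₑ²/2}
  + (a₀²σₑ²(σₑ²+1) + σ₀²) e^{μₑ+σₑ²/2}`. -/
theorem hajek_asymptotic_variance_closed_form
    {Ω : Type*} [MeasurableSpace Ω] (P : Measure Ω) [IsProbabilityMeasure P]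
    (W ε₁ ε₀ : Ω → ℝ) (hW : Measurable W) (hε₁ : Measurable ε₁) (hε₀ : Measurable ε₀)
    (hindep : iIndepFun ![W, ε₁, ε₀] P)
    (μₑ σₑ μ₁ μ₀ σ₁ σ₀ a₁ a₀ : ℝ) (hσₑ : 0 < σₑ) (hσ₁ : 0 ≤ σ₁) (hσ₀ : 0 ≤ σ₀)
    (hWlaw : Measure.map W P = gaussianReal μₑ ⟨σₑ ^ 2, sq_nonneg σₑ⟩)
    (hε₁law : Measure.map ε₁ P = gaussianReal μ₁ ⟨σ₁ ^ 2, sq_nonneg σ₁⟩)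
    (hε₀law : Measure.map ε₀ P = gaussianReal μ₀ ⟨σ₀ ^ 2, sq_nonneg σ₀⟩) :
    (∫ ω, (a₁ * W ω + ε₁ ω - ∫ ω', (a₁ * W ω' + ε₁ ω') ∂P) ^ 2 / expit (W ω) ∂P)
      + (∫ ω, (a₀ * W ω + ε₀ ω - ∫ ω', (a₀ * W ω' + ε₀ ω') ∂P) ^ 2 / (1 - expit (W ω)) ∂P)
      = (a₁ ^ 2 + a₀ ^ 2) * σₑ ^ 2 + σ₁ ^ 2 + σ₀ ^ 2
        + (a₁ ^ 2 * σₑ ^ 2 * (σₑ ^ 2 + 1) + σ₁ ^ 2) * Real.exp (-μₑ + σₑ ^ 2 / 2)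
        + (a₀ ^ 2 * σₑ ^ 2 * (σₑ ^ 2 + 1) + σ₀ ^ 2) * Real.exp (μₑ + σₑ ^ 2 / 2) :=
  hajek_asymptotic_variance_closed_form_general P W ε₁ ε₀ hindep μₑ σₑ μ₁ μ₀ σ₁ σ₀ a₁ a₀ hWlaw
    hε₁law hε₀law
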